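/- arXiv:2208.13664 — 3 statements merged into one kernel-verified Lean document; each statement's English description precedes it below -/
import Mathlib

section
/- Let R be a commutative ring and let λ_{ij}, λ_{ik}, λ_{jk} be units in R. Define h^i = λ_{jk}/(λ_{ij}λ_{ik}), h^j = λ_{ik}/(λ_{ij}λ_{jk}), h^k = λ_{ij}/(λ_{ik}λ_{jk}), and the 2×2 matrices E(x) = [[0,-x],[x⁻¹,0]], A(h) = [[1,0],[h,1]]. Then A(h^i)·E(λ_{ij})·A(h^j)·E(λ_{jk})·A(h^k)·E(λ_{ik}) = I. -/
open Matrix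

/-- The 2×2 edge matrix E(x) = [[0,-x],[x⁻¹,0]] for a unit x. -/
def Emat2 {R : Type*} [CommRing R] (x : Rˣ) : Matrix (Fin 2) (Fin 2) R :=
  !![0, -(x : R); ((x⁻¹ : Rˣ) : R), 0]

/-- The 2×2 angle matrix A(h) = [[1,0],[h,1]]. -/
def Amat2 {R : Type*} [CommRing R] (h : R) : Matrix (Fin 2) (Fin 2) R :=
  !![1, 0; h, 1]

/-- Flatness around a triangle (classical 2×2 case): with
    hⁱ = λⱼₖ/(λᵢⱼλᵢₖ) and cyclic variants,
    A(hⁱ)·E(λᵢⱼ)·A(hʲ)·E(λⱼₖ)·A(hᵏ)·E(λᵢₖ) = I. -/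
theorem hexagon_monodromy {R : Type*} [CommRing R] (lij lik ljk : Rˣ) :
    Amat2 ((ljk : R) * (((lij * lik)⁻¹ : Rˣ) : R)) * Emat2 lij *
    Amat2 ((lik : R) * (((lij * ljk)⁻¹ : Rˣ) : R)) * Emat2 ljk *
    Amat2 ((lij : R) * (((lik * ljk)⁻¹ : Rˣ) : R)) * Emat2 lik = 1 := by
  have hx : (lij : R) * ((lij⁻¹ : Rˣ) : R) = 1 := by
    rw [← Units.val_mul, mul_inv_cancel, Units.val_one]
  have hy : (lik : R) * ((lik⁻¹ : Rˣ) : R) = 1 := by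
    rw [← Units.val_mul, mul_inv_cancel, Units.val_one]
  have hz : (ljk : R) * ((ljk⁻¹ : Rˣ) : R) = 1 := by
    rw [← Units.val_mul, mul_inv_cancel, Units.val_one]
  set x : R := (lij : R)
  set x' : R := ((lij⁻¹ : Rˣ) : R)
  set y : R := (lik : R)
  set y' : R := ((lik⁻¹ : Rˣ) : R)
  set z : R := (ljk : R)
  set z' : R := ((ljk⁻¹ : Rˣ) : R)
  simp only [Emat2, Amat2, _root_.mul_inv_rev, Units.val_mul]
  ext i j
  fin_cases i <;> fin_cases j <;>
      simp [Matrix.mul_apply, Fin.sum_univ_succ, Matrix.one_apply]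
  · linear_combination y*z'*z*hx + y*hz
  · linear_combination x*z'*z'*y*z*y'*hx + x*z'*y*y'*hz + x*z'*hy
  · linear_combination -(x'*z*y'*y*z'*hx) - x'*y*y'*hz - x'*hy
  · linear_combination (1 - x*x'*y*y'*z*z') * (y*y'*z*z'*hx + y*y'*hz + hy)
end

section
/- Let R be a (not necessarily commutative) ring. Suppose h₁, h₂, s₁, s₂ ∈ R where h₁, h₂ are central, s₁² = s₂² = 0, s₁s₂ = -s₂s₁, and each hᵢ commutes with each sⱼ. Define the 3×3 matrix A(h, s) = [[1,0,0],[h,1,-s],[s,0,1]]. Then A(h₁,s₁)·A(h₂,s₂) = A(h₁ + h₂ + s₂s₁, s₁ + s₂). -/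
open Matrix

/-- The 3×3 angle matrix A(h,s) = [[1,0,0],[h,1,-s],[s,0,1]]. -/
def Amat3 {R : Type*} [Ring R] (h s : R) : Matrix (Fin 3) (Fin 3) R :=
  !![1, 0, 0; h, 1, -s; s, 0, 1]

theorem Amat3_mul_Amat3 {R : Type*} [Ring R] (h₁ h₂ s₁ s₂ : R) :
    Amat3 h₁ s₁ * Amat3 h₂ s₂ = Amat3 (h₁ + h₂ - s₁ * s₂) (s₁ + s₂) := by
  simp only [Amat3, mul_fin_three, mul_one, zero_mul, add_zero, mul_zero, mul_neg, neg_zero,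
    one_mul, neg_mul, zero_add, neg_add_rev, EmbeddingLike.apply_eq_iff_eq, vecCons_inj,
    and_true, true_and]
  abel

theorem Amat3_mul_general {R : Type*} [Ring R] (h₁ h₂ s₁ s₂ : R)
    (hanti : s₁ * s₂ = -(s₂ * s₁)) :
    Amat3 h₁ s₁ * Amat3 h₂ s₂ = Amat3 (h₁ + h₂ + s₂ * s₁) (s₁ + s₂) := by
  rw [Amat3_mul_Amat3, hanti, sub_neg_eq_add]

/-- Product rule for angle matrices (Lemma 4.2(a)):
    A(h₁,s₁)·A(h₂,s₂) = A(h₁ + h₂ + s₂s₁, s₁ + s₂). -/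
theorem Amat3_mul {R : Type*} [Ring R] (h₁ h₂ s₁ s₂ : R)
    (hc₁ : ∀ r : R, h₁ * r = r * h₁) (hc₂ : ∀ r : R, h₂ * r = r * h₂)
    (hs₁ : s₁ * s₁ = 0) (hs₂ : s₂ * s₂ = 0)
    (hanti : s₁ * s₂ = -(s₂ * s₁)) :
    Amat3 h₁ s₁ * Amat3 h₂ s₂ = Amat3 (h₁ + h₂ + s₂ * s₁) (s₁ + s₂) :=
  Amat3_mul_general h₁ h₂ s₁ s₂ hanti
end

section
/- Let R be a ring. Suppose h₁, h₂ are central in R and s₁, s₂ ∈ R satisfy s₁² = s₂² = 0, s₁s₂ = -s₂s₁, with hᵢ commuting with sⱼ. Let ρ = diag(-1,-1,1) and A(h,s) = [[1,0,0],[h,1,-s],[s,0,1]]. Then A(h₁,s₁)·ρ·A(h₂,s₂) = A(h₁ + h₂ + s₁s₂, s₁ - s₂)·ρ. -/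
open Matrix

/-- The fermionic reflection ρ = diag(-1,-1,1). -/
def rhoMat {R : Type*} [Ring R] : Matrix (Fin 3) (Fin 3) R :=
  !![-1, 0, 0; 0, -1, 0; 0, 0, 1]

/-- Lemma 4.2(b) in matrix form:
    A(h₁,s₁)·ρ·A(h₂,s₂) = A(h₁ + h₂ + s₁s₂, s₁ - s₂)·ρ. -/
theorem Amat3_rho_mul {R : Type*} [Ring R] (h₁ h₂ s₁ s₂ : R)
    (hc₁ : ∀ r : R, h₁ * r = r * h₁) (hc₂ : ∀ r : R, h₂ * r = r * h₂)
    (hs₁ : s₁ * s₁ = 0) (hs₂ : s₂ * s₂ = 0)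
    (hanti : s₁ * s₂ = -(s₂ * s₁)) :
    Amat3 h₁ s₁ * rhoMat * Amat3 h₂ s₂ = Amat3 (h₁ + h₂ + s₁ * s₂) (s₁ - s₂) * rhoMat := by
  simp only [Amat3, rhoMat, Matrix.mul_fin_three]
  ext i j
  fin_cases i <;> fin_cases j <;>
    simp [mul_add, add_mul, hs₁, hs₂, hanti, hc₁ s₂, hc₂ s₁, sub_eq_add_neg] <;> abel
end
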